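/- Let x, y be in the closed unit ball of ℝ^d and ε ∈ (0, 1/2]. With the shrink-lift transformation x↑ := (εx; √(1 - ε²‖x‖²)), the angle between x↑ and y↑ satisfies ε‖x-y‖ ≤ ∠(x↑, y↑) ≤ m(ε)·ε‖x-y‖, where m(ε) = √(1+2ε²)/√(1-2ε²). -/

import Mathlib

/-!
The lifted points are unit vectors, so `cos θ = 1 - c ^ 2 / 2` for their angle `θ` and chord `c`,
and `c ^ 2 = ε ^ 2 ‖x - y‖ ^ 2 + (√(1 - ε ^ 2 ‖x‖ ^ 2) - √(1 - ε ^ 2 ‖y‖ ^ 2)) ^ 2`.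
The lower bound is "chord ≤ arc". For the upper bound, rationalising the difference of square roots
bounds the second summand by `2 ε ^ 4 ‖x - y‖ ^ 2 / (1 - ε ^ 2)`, and `x ≤ tan x` at `θ / 2` gives
`θ ^ 2 (4 - c ^ 2) ≤ 4 c ^ 2`; combining the two is elementary algebra.
-/

noncomputable def shrinkLift (d : ℕ) (ε : ℝ) (x : EuclideanSpace ℝ (Fin d)) :
    EuclideanSpace ℝ (Fin (d + 1)) :=
  WithLp.toLp 2 fun i => if h : (i : ℕ) < d then ε * x ⟨i, h⟩ else Real.sqrt (1 - ε ^ 2 * ‖x‖ ^ 2)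

open Real

/-- A rewriting of `(θ / 2) * cos (θ / 2) ≤ sin (θ / 2)`, i.e. of `x ≤ tan x` on `[0, π / 2)`. -/
theorem Real.sq_add_four_mul_one_add_cos_le {θ : ℝ} (h0 : 0 ≤ θ) (hπ : θ ≤ π) :
    (θ ^ 2 + 4) * (1 + cos θ) ≤ 8 := by
  have hcos0 : 0 ≤ cos (θ / 2) := cos_nonneg_of_mem_Icc ⟨by linarith, by linarith⟩
  have hcos : cos (θ / 2) ≤ 1 / √((θ / 2) ^ 2 + 1) :=
    cos_le_one_div_sqrt_sq_add_one (by linarith) (by linarith)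
  have hsq : cos (θ / 2) ^ 2 * ((θ / 2) ^ 2 + 1) ≤ 1 := by
    have hpos : 0 < (θ / 2) ^ 2 + 1 := by positivity
    have := pow_le_pow_left₀ hcos0 hcos 2
    rwa [div_pow, one_pow, sq_sqrt hpos.le, le_div_iff₀ hpos] at this
  rw [cos_sq, show 2 * (θ / 2) = θ by ring] at hsq
  linarith

namespace InnerProductGeometry

variable {V : Type*} [NormedAddCommGroup V] [InnerProductSpace ℝ V] {u v : V}

theorem cos_angle_of_norm_eq_one (hu : ‖u‖ = 1) (hv : ‖v‖ = 1) :
    cos (angle u v) = 1 - ‖u - v‖ ^ 2 / 2 := by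
  rw [cos_angle, hu, hv, norm_sub_sq_real, hu, hv]
  ring

theorem norm_sub_le_angle (hu : ‖u‖ = 1) (hv : ‖v‖ = 1) : ‖u - v‖ ≤ angle u v := by
  have h := one_sub_sq_div_two_le_cos (x := angle u v)
  rw [cos_angle_of_norm_eq_one hu hv] at h
  exact (pow_le_pow_iff_left₀ (norm_nonneg _) (angle_nonneg u v) two_ne_zero).1 (by linarith)

theorem angle_sq_mul_four_sub_norm_sub_sq_le (hu : ‖u‖ = 1) (hv : ‖v‖ = 1) :
    angle u v ^ 2 * (4 - ‖u - v‖ ^ 2) ≤ 4 * ‖u - v‖ ^ 2 := by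
  have h := sq_add_four_mul_one_add_cos_le (angle_nonneg u v) (angle_le_pi u v)
  rw [cos_angle_of_norm_eq_one hu hv] at h
  linarith

end InnerProductGeometry

theorem sq_norm_sq_sub_norm_sq_le {E : Type*} [SeminormedAddCommGroup E] {x y : E}
    (hx : ‖x‖ ≤ 1) (hy : ‖y‖ ≤ 1) : (‖x‖ ^ 2 - ‖y‖ ^ 2) ^ 2 ≤ 4 * ‖x - y‖ ^ 2 := by
  have hdiff : (‖x‖ - ‖y‖) ^ 2 ≤ ‖x - y‖ ^ 2 := sq_le_sq' (abs_le.1 (abs_norm_sub_norm_le x y)).1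
    (abs_le.1 (abs_norm_sub_norm_le x y)).2
  have hsum : (‖x‖ + ‖y‖) ^ 2 ≤ 2 ^ 2 :=
    pow_le_pow_left₀ (by positivity) (by linarith) 2
  calc (‖x‖ ^ 2 - ‖y‖ ^ 2) ^ 2 = (‖x‖ - ‖y‖) ^ 2 * (‖x‖ + ‖y‖) ^ 2 := by ring
    _ ≤ ‖x - y‖ ^ 2 * 2 ^ 2 := mul_le_mul hdiff hsum (by positivity) (by positivity)
    _ = 4 * ‖x - y‖ ^ 2 := by ring

theorem Real.sq_sqrt_one_sub_sub_sqrt_one_sub_mul_le {a b : ℝ} (ha : a ≤ 1) (hb : b ≤ 1) :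
    (√(1 - a) - √(1 - b)) ^ 2 * (2 - a - b) ≤ (a - b) ^ 2 := by
  have hA := sq_sqrt (sub_nonneg.2 ha)
  have hB := sq_sqrt (sub_nonneg.2 hb)
  have hAB := mul_nonneg (sqrt_nonneg (1 - a)) (sqrt_nonneg (1 - b))
  calc (√(1 - a) - √(1 - b)) ^ 2 * (2 - a - b)
      ≤ (√(1 - a) - √(1 - b)) ^ 2 * (√(1 - a) + √(1 - b)) ^ 2 := by
        gcongr
        nlinarith
    _ = (√(1 - a) ^ 2 - √(1 - b) ^ 2) ^ 2 := by ring
    _ = (a - b) ^ 2 := by rw [hA, hB]; ring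

/-- Used with `e = ε ^ 2`, `t = (ε * ‖x - y‖) ^ 2`, `c` the chord and `θ` the angle; the constraint
`e ≤ 1 / 4` enters through `3 * e + 2 * e ^ 2 ≤ 1`. -/
theorem sq_mul_one_sub_two_mul_le {e t c θ : ℝ} (he0 : 0 ≤ e) (he : e ≤ 1 / 4) (ht : t ≤ 4 * e)
    (hc : c ^ 2 * (1 - e) ≤ t * (1 + e)) (hθ : θ ^ 2 * (4 - c ^ 2) ≤ 4 * c ^ 2) :
    θ ^ 2 * (1 - 2 * e) ≤ (1 + 2 * e) * t := by
  have hθc : θ ^ 2 * (4 * (1 - e) - t * (1 + e)) ≤ 4 * t * (1 + e) := by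
    nlinarith [mul_le_mul_of_nonneg_right hθ (by linarith : (0 : ℝ) ≤ 1 - e),
      mul_le_mul_of_nonneg_right hc (by positivity : (0 : ℝ) ≤ 4 + θ ^ 2)]
  have hθt : θ ^ 2 * (1 - 2 * e - e ^ 2) ≤ t * (1 + e) := by
    nlinarith [mul_le_mul_of_nonneg_left ht (by positivity : (0 : ℝ) ≤ θ ^ 2 * (1 + e))]
  have hpos : 0 < 1 - 2 * e - e ^ 2 := by nlinarith
  have ht0 : 0 ≤ t := by nlinarith [sq_nonneg c]
  refine le_of_mul_le_mul_right ?_ hpos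
  nlinarith [mul_le_mul_of_nonneg_left hθt (by linarith : (0 : ℝ) ≤ 1 - 2 * e),
    mul_nonneg (mul_nonneg ht0 he0) (by nlinarith : (0 : ℝ) ≤ 1 - 3 * e - 2 * e ^ 2)]

theorem norm_shrinkLift {d : ℕ} {ε : ℝ} {x : EuclideanSpace ℝ (Fin d)} (h : ε ^ 2 * ‖x‖ ^ 2 ≤ 1) :
    ‖shrinkLift d ε x‖ = 1 := by
  have hx : ‖x‖ ^ 2 = ∑ i, x i ^ 2 := by simp [EuclideanSpace.norm_sq_eq]
  have hsq : ‖shrinkLift d ε x‖ ^ 2 = 1 ^ 2 := by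
    rw [EuclideanSpace.norm_sq_eq, Fin.sum_univ_castSucc]
    simp only [shrinkLift]
    simp [sq_abs, mul_pow, sq_sqrt (sub_nonneg.2 h), ← Finset.mul_sum, ← hx]
  exact (pow_left_inj₀ (norm_nonneg _) zero_le_one two_ne_zero).1 hsq

theorem norm_shrinkLift_sub_sq (d : ℕ) (ε : ℝ) (x y : EuclideanSpace ℝ (Fin d)) :
    ‖shrinkLift d ε x - shrinkLift d ε y‖ ^ 2 =
      ε ^ 2 * ‖x - y‖ ^ 2 + (√(1 - ε ^ 2 * ‖x‖ ^ 2) - √(1 - ε ^ 2 * ‖y‖ ^ 2)) ^ 2 := by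
  rw [EuclideanSpace.norm_sq_eq, Fin.sum_univ_castSucc, EuclideanSpace.norm_sq_eq (x - y)]
  simp [shrinkLift, sq_abs, mul_pow, Finset.mul_sum, ← mul_sub]

theorem mul_norm_sub_le_norm_shrinkLift_sub {d : ℕ} {ε : ℝ} (hε : 0 ≤ ε)
    (x y : EuclideanSpace ℝ (Fin d)) : ε * ‖x - y‖ ≤ ‖shrinkLift d ε x - shrinkLift d ε y‖ := by
  refine (pow_le_pow_iff_left₀ (by positivity) (norm_nonneg _) two_ne_zero).1 ?_
  rw [norm_shrinkLift_sub_sq, mul_pow]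
  exact le_add_of_nonneg_right (sq_nonneg _)

theorem norm_shrinkLift_sub_sq_mul_le {d : ℕ} {ε : ℝ} {x y : EuclideanSpace ℝ (Fin d)}
    (hx : ‖x‖ ≤ 1) (hy : ‖y‖ ≤ 1) (hε : ε ^ 2 ≤ 1) :
    ‖shrinkLift d ε x - shrinkLift d ε y‖ ^ 2 * (1 - ε ^ 2) ≤ ε ^ 2 * ‖x - y‖ ^ 2 * (1 + ε ^ 2) := by
  have hx2 : ε ^ 2 * ‖x‖ ^ 2 ≤ ε ^ 2 :=
    mul_le_of_le_one_right (sq_nonneg ε) (pow_le_one₀ (norm_nonneg x) hx)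
  have hy2 : ε ^ 2 * ‖y‖ ^ 2 ≤ ε ^ 2 :=
    mul_le_of_le_one_right (sq_nonneg ε) (pow_le_one₀ (norm_nonneg y) hy)
  have hlift := sq_sqrt_one_sub_sub_sqrt_one_sub_mul_le (hx2.trans hε) (hy2.trans hε)
  have hnorms : (ε ^ 2 * ‖x‖ ^ 2 - ε ^ 2 * ‖y‖ ^ 2) ^ 2 ≤ (ε ^ 2) ^ 2 * (4 * ‖x - y‖ ^ 2) := by
    rw [← mul_sub, mul_pow]
    exact mul_le_mul_of_nonneg_left (sq_norm_sq_sub_norm_sq_le hx hy) (by positivity)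
  rw [norm_shrinkLift_sub_sq]
  have hsum : 2 - 2 * ε ^ 2 ≤ 2 - ε ^ 2 * ‖x‖ ^ 2 - ε ^ 2 * ‖y‖ ^ 2 := by linarith
  nlinarith [mul_le_mul_of_nonneg_left hsum
    (sq_nonneg (√(1 - ε ^ 2 * ‖x‖ ^ 2) - √(1 - ε ^ 2 * ‖y‖ ^ 2)))]

theorem stmt_3 (d : ℕ) (x y : EuclideanSpace ℝ (Fin d)) (hx : ‖x‖ ≤ 1) (hy : ‖y‖ ≤ 1)
    (ε : ℝ) (hε0 : 0 < ε) (hε : ε ≤ 1 / 2) :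
    ε * ‖x - y‖ ≤ InnerProductGeometry.angle (shrinkLift d ε x) (shrinkLift d ε y) ∧
    InnerProductGeometry.angle (shrinkLift d ε x) (shrinkLift d ε y) ≤
      Real.sqrt (1 + 2 * ε ^ 2) / Real.sqrt (1 - 2 * ε ^ 2) * (ε * ‖x - y‖) := by
  have hε2 : ε ^ 2 ≤ 1 / 4 := by nlinarith
  have hu := norm_shrinkLift (d := d) (ε := ε) (x := x)
    (by nlinarith [pow_le_one₀ (n := 2) (norm_nonneg x) hx])
  have hv := norm_shrinkLift (d := d) (ε := ε) (x := y)
    (by nlinarith [pow_le_one₀ (n := 2) (norm_nonneg y) hy])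
  refine ⟨(mul_norm_sub_le_norm_shrinkLift_sub hε0.le x y).trans
    (InnerProductGeometry.norm_sub_le_angle hu hv), ?_⟩
  have hxy : ‖x - y‖ ≤ 2 := (norm_sub_le x y).trans (by linarith)
  have hangle := sq_mul_one_sub_two_mul_le (sq_nonneg ε) hε2
    (by rw [mul_pow, mul_comm 4]; gcongr; nlinarith [norm_nonneg (x - y)] :
      (ε * ‖x - y‖) ^ 2 ≤ 4 * ε ^ 2)
    (by nlinarith [norm_shrinkLift_sub_sq_mul_le hx hy (hε2.trans (by norm_num))])
    (InnerProductGeometry.angle_sq_mul_four_sub_norm_sub_sq_le hu hv)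
  refine (pow_le_pow_iff_left₀ (InnerProductGeometry.angle_nonneg _ _) (by positivity)
    two_ne_zero).1 ?_
  rw [mul_pow, div_pow, sq_sqrt (by positivity), sq_sqrt (by linarith), div_mul_eq_mul_div,
    le_div_iff₀ (by linarith)]
  exact hangle
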